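/- arXiv:1410.0116 — 3 statements merged into one kernel-verified Lean document; each statement's English description precedes it below -/
import Mathlib

section
/- For every n ≥ 2, every A ∈ ℂ^{n×n}, λ ∈ ℂ and nonzero v ∈ ℂ^n with Av = λv and A_{λ,v} invertible, the condition number satisfies μ(A,λ,v) ≥ 1/√2. -/
noncomputable section

open Matrix Set

/-- `T_v`: the orthogonal complement of `v` in `ℂ^n`. -/
def Tv {n : ℕ} (v : EuclideanSpace ℂ (Fin n)) : Submodule ℂ (EuclideanSpace ℂ (Fin n)) :=
  (ℂ ∙ v)ᗮ

/-- The linear map `A_{λ,v} : T_v → T_v`, `x ↦ P_{v⊥}((A - λ·Id) x)`. -/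
def Alv {n : ℕ} (A : Matrix (Fin n) (Fin n) ℂ) (lam : ℂ) (v : EuclideanSpace ℂ (Fin n)) :
    Tv v →ₗ[ℂ] Tv v :=
  ((Tv v).orthogonalProjectionOnto).toLinearMap ∘ₗ
    (Matrix.toEuclideanLin A - lam • LinearMap.id) ∘ₗ (Tv v).subtype

/-- `A_{λ,v}` as a continuous linear map. -/
def AlvC {n : ℕ} (A : Matrix (Fin n) (Fin n) ℂ) (lam : ℂ) (v : EuclideanSpace ℂ (Fin n)) :
    Tv v →L[ℂ] Tv v :=
  LinearMap.toContinuousLinearMap (Alv A lam v)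

/-- Frobenius norm of a complex matrix. -/
def frobNorm {n : ℕ} (A : Matrix (Fin n) (Fin n) ℂ) : ℝ :=
  Real.sqrt (∑ i, ∑ j, ‖A i j‖ ^ 2)

/-- The condition number `μ(A,λ,v) = ‖A‖_F ‖A_{λ,v}^{-1}‖`. -/
def mu {n : ℕ} (A : Matrix (Fin n) (Fin n) ℂ) (lam : ℂ) (v : EuclideanSpace ℂ (Fin n)) : ℝ :=
  frobNorm A * ‖(AlvC A lam v).inverse‖

/-- Fubini-Study (angular) distance. -/
def dP {n : ℕ} (v w : EuclideanSpace ℂ (Fin n)) : ℝ :=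
  Real.arccos (‖(inner ℂ v w : ℂ)‖ / (‖v‖ * ‖w‖))

/-- The distance on triples. -/
def distT {n : ℕ} (A : Matrix (Fin n) (Fin n) ℂ) (lam : ℂ) (v : EuclideanSpace ℂ (Fin n))
    (A' : Matrix (Fin n) (Fin n) ℂ) (lam' : ℂ) (v' : EuclideanSpace ℂ (Fin n)) : ℝ :=
  Real.sqrt ((frobNorm ((frobNorm A)⁻¹ • A - (frobNorm A')⁻¹ • A')) ^ 2 +
    ‖lam / (frobNorm A : ℂ) - lam' / (frobNorm A' : ℂ)‖ ^ 2 + dP v v' ^ 2)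

/-!
Put `u = v / ‖v‖`. For a unit vector `x ⊥ v` the pair `(u, x)` is orthonormal and `A u = λ u`,
so Bessel's inequality for each row of `A` gives `‖A x‖² + |λ|² ≤ ‖A‖_F²`. As
`A_{λ,v} x = P_{v⊥}(A x) - λ x`, this yields `‖A_{λ,v}‖ ≤ ‖A x‖ + |λ| ≤ √2 ‖A‖_F`, and the bound
follows from `1 ≤ ‖A_{λ,v}‖ ‖A_{λ,v}⁻¹‖`, valid because `T_v ≠ 0` for `n ≥ 2`.
-/

open scoped InnerProductSpace

section Frobenius

variable {n : ℕ} (A : Matrix (Fin n) (Fin n) ℂ)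

lemma frobNorm_nonneg : 0 ≤ frobNorm A :=
  Real.sqrt_nonneg _

lemma frobNorm_sq : frobNorm A ^ 2 = ∑ i, ∑ j, ‖A i j‖ ^ 2 :=
  Real.sq_sqrt (by positivity)

lemma inner_star_row_eq_toEuclideanLin_apply (i : Fin n) (y : EuclideanSpace ℂ (Fin n)) :
    ⟪WithLp.toLp 2 (star (A i)), y⟫_ℂ = toEuclideanLin A y i := by
  rw [EuclideanSpace.inner_eq_star_dotProduct, star_star, dotProduct_comm]
  rfl

lemma sum_norm_sq_toEuclideanLin_le_frobNorm_sq {ι : Type*} {e : ι → EuclideanSpace ℂ (Fin n)}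
    (he : Orthonormal ℂ e) (s : Finset ι) :
    ∑ k ∈ s, ‖toEuclideanLin A (e k)‖ ^ 2 ≤ frobNorm A ^ 2 := by
  let row (i : Fin n) : EuclideanSpace ℂ (Fin n) := WithLp.toLp 2 (star (A i))
  calc ∑ k ∈ s, ‖toEuclideanLin A (e k)‖ ^ 2 = ∑ i, ∑ k ∈ s, ‖⟪e k, row i⟫_ℂ‖ ^ 2 := by
        simp only [EuclideanSpace.norm_sq_eq, norm_inner_symm (e _),
          inner_star_row_eq_toEuclideanLin_apply, row]
        exact Finset.sum_comm
    _ ≤ ∑ i, ‖row i‖ ^ 2 := Finset.sum_le_sum fun i _ => he.sum_inner_products_le (row i)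
    _ = frobNorm A ^ 2 := by simp [row, frobNorm_sq, EuclideanSpace.norm_sq_eq]

lemma norm_sq_add_norm_sq_le_frobNorm_sq_of_eigenvector {lam : ℂ} {u x : EuclideanSpace ℂ (Fin n)}
    (hu : ‖u‖ = 1) (hx : ‖x‖ = 1) (hux : ⟪u, x⟫_ℂ = 0) (hAu : toEuclideanLin A u = lam • u) :
    ‖toEuclideanLin A x‖ ^ 2 + ‖lam‖ ^ 2 ≤ frobNorm A ^ 2 := by
  have hON : Orthonormal ℂ ![u, x] := by
    rw [orthonormal_iff_ite]
    intro i j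
    fin_cases i <;> fin_cases j <;> simp [hu, hx, hux, inner_eq_zero_symm.mp hux]
  simpa [Fin.sum_univ_two, hAu, norm_smul, hu, add_comm] using
    sum_norm_sq_toEuclideanLin_le_frobNorm_sq A hON Finset.univ

end Frobenius

section Projection

variable {n : ℕ} (A : Matrix (Fin n) (Fin n) ℂ) (lam : ℂ) (v : EuclideanSpace ℂ (Fin n))

lemma nontrivial_Tv (hn : 2 ≤ n) : Nontrivial (Tv v) := by
  apply Module.nontrivial_of_finrank_pos (R := ℂ)
  have hsum := Submodule.finrank_add_finrank_orthogonal (ℂ ∙ v)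
  have hspan : Module.finrank ℂ (ℂ ∙ v) ≤ 1 := by
    simpa using finrank_span_le_card (R := ℂ) ({v} : Set (EuclideanSpace ℂ (Fin n)))
  rw [finrank_euclideanSpace_fin] at hsum
  rw [Tv]
  omega

lemma coe_AlvC_apply (x : Tv v) :
    (AlvC A lam v x : EuclideanSpace ℂ (Fin n)) =
      ((Tv v).orthogonalProjectionOnto (toEuclideanLin A x) : EuclideanSpace ℂ (Fin n)) -
        lam • (x : EuclideanSpace ℂ (Fin n)) := by
  change ((Tv v).orthogonalProjectionOnto
    (toEuclideanLin A x - lam • (x : EuclideanSpace ℂ (Fin n))) : EuclideanSpace ℂ (Fin n)) = _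
  rw [map_sub, map_smul, Submodule.orthogonalProjectionOnto_mem_subspace_eq_self]
  rfl

lemma norm_AlvC_le (hv : v ≠ 0) (heig : toEuclideanLin A v = lam • v) :
    ‖AlvC A lam v‖ ≤ Real.sqrt 2 * frobNorm A := by
  refine ContinuousLinearMap.opNorm_le_of_unit_norm
    (mul_nonneg (Real.sqrt_nonneg 2) (frobNorm_nonneg A)) fun x hx => ?_
  have hx' : ‖(x : EuclideanSpace ℂ (Fin n))‖ = 1 := hx
  have hvx : ⟪(‖v‖⁻¹ : ℂ) • v, (x : EuclideanSpace ℂ (Fin n))⟫_ℂ = 0 := by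
    rw [inner_smul_left, Submodule.mem_orthogonal_singleton_iff_inner_right.mp x.2, mul_zero]
  have hbessel := norm_sq_add_norm_sq_le_frobNorm_sq_of_eigenvector A (norm_smul_inv_norm hv) hx'
    hvx (by rw [map_smul, heig, smul_comm])
  have hsum : ‖toEuclideanLin A x‖ + ‖lam‖ ≤ Real.sqrt 2 * frobNorm A := by
    refine (pow_le_pow_iff_left₀ (by positivity)
      (mul_nonneg (Real.sqrt_nonneg 2) (frobNorm_nonneg A)) two_ne_zero).mp ?_
    rw [mul_pow, Real.sq_sqrt zero_le_two]
    nlinarith [sq_nonneg (‖toEuclideanLin A x‖ - ‖lam‖)]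
  calc ‖AlvC A lam v x‖
      ≤ ‖(Tv v).orthogonalProjectionOnto (toEuclideanLin A x)‖ +
          ‖lam • (x : EuclideanSpace ℂ (Fin n))‖ := by
        rw [← Submodule.norm_coe, coe_AlvC_apply]
        exact norm_sub_le _ _
    _ ≤ ‖toEuclideanLin A x‖ + ‖lam‖ := by
        rw [norm_smul, hx', mul_one]
        gcongr
        exact Submodule.norm_orthogonalProjectionOnto_apply_le _ _
    _ ≤ Real.sqrt 2 * frobNorm A := hsum

end Projection

lemma ContinuousLinearMap.one_le_norm_mul_norm_inverse {𝕜 E : Type*} [NontriviallyNormedField 𝕜]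
    [CompleteSpace 𝕜] [NormedAddCommGroup E] [NormedSpace 𝕜 E] [FiniteDimensional 𝕜 E]
    [Nontrivial E] {f : E →L[𝕜] E} (hf : Function.Bijective f) : 1 ≤ ‖f‖ * ‖f.inverse‖ := by
  let e := (LinearEquiv.ofBijective (f : E →ₗ[𝕜] E) hf).toContinuousLinearEquiv
  have he : (e : E →L[𝕜] E) = f := rfl
  rw [← he, ContinuousLinearMap.inverse_equiv]
  exact e.one_le_norm_mul_norm_symm

/-- Lemma 3.8: for every well-posed eigentriple, `μ(A,λ,v) ≥ 1/√2`. -/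
theorem mu_lower_bound {n : ℕ} (hn : 2 ≤ n) (A : Matrix (Fin n) (Fin n) ℂ) (lam : ℂ)
    (v : EuclideanSpace ℂ (Fin n)) (hv : v ≠ 0)
    (heig : Matrix.toEuclideanLin A v = lam • v)
    (hinv : Function.Bijective (Alv A lam v)) :
    1 / Real.sqrt 2 ≤ mu A lam v := by
  have := nontrivial_Tv v hn
  have hcond := ContinuousLinearMap.one_le_norm_mul_norm_inverse (f := AlvC A lam v) hinv
  rw [mu, div_le_iff₀ (by positivity)]
  calc 1 ≤ ‖AlvC A lam v‖ * ‖(AlvC A lam v).inverse‖ := hcond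
    _ ≤ Real.sqrt 2 * frobNorm A * ‖(AlvC A lam v).inverse‖ := by
        gcongr
        exact norm_AlvC_le A lam v hv heig
    _ = frobNorm A * ‖(AlvC A lam v).inverse‖ * Real.sqrt 2 := by ring

end
end

section
/- Let λ be a simple eigenvalue of A ∈ ℂ^{n×n} (a root of multiplicity one of the characteristic polynomial), let v ∈ ℂ^n be nonzero with Av = λv, and let u ∈ ℂ^n be nonzero with A*u = conj(λ)·u. Then ⟨v,u⟩ ≠ 0. -/
/-! Write `g = A - λ`. Fitting's decomposition `ℂⁿ = ker g^∞ ⊕ range g^∞` shows that `ℂⁿ` is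
spanned by the generalized eigenspace of `λ` and `range g`. Simplicity of `λ` makes that
generalized eigenspace the line `ℂ v`, and `A* u = conj λ • u` says exactly that `u ⊥ range g`.
So `u ⊥ v` would give `u ⊥ ℂⁿ`, i.e. `u = 0`. -/

noncomputable section

open Matrix Set

theorem Matrix.charpoly_toEuclideanLin {𝕜 ι : Type*} [RCLike 𝕜] [Fintype ι] [DecidableEq ι]
    (A : Matrix ι ι 𝕜) : (toEuclideanLin A).charpoly = A.charpoly :=
  charpoly_toLin A (PiLp.basisFun 2 𝕜 ι)

namespace Module.End

section Field

variable {K V : Type*} [Field K] [AddCommGroup V] [Module K V] [FiniteDimensional K V]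

theorem maxGenEigenspace_sup_range_sub_smul_eq_top (f : End K V) (μ : K) :
    f.maxGenEigenspace μ ⊔ LinearMap.range (f - μ • 1) = ⊤ := by
  have hfitting := LinearMap.isCompl_iSup_ker_pow_iInf_range_pow (f - μ • 1)
  have hker : f.maxGenEigenspace μ = ⨆ k : ℕ, LinearMap.ker ((f - μ • 1) ^ k) := by
    simp [← iSup_genEigenspace_eq, genEigenspace_nat]
  have hrange : ⨅ k : ℕ, LinearMap.range ((f - μ • 1) ^ k) ≤ LinearMap.range (f - μ • 1) :=
    iInf_le_of_le 1 (by rw [pow_one])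
  rw [eq_top_iff, ← hfitting.sup_eq_top, ← hker]
  exact sup_le_sup_left hrange _

theorem maxGenEigenspace_eq_span_of_rootMultiplicity_eq_one {f : End K V} {μ : K} {v : V}
    (hsimple : f.charpoly.rootMultiplicity μ = 1) (hv : f.HasEigenvector μ v) :
    f.maxGenEigenspace μ = K ∙ v := by
  have hmem : v ∈ f.maxGenEigenspace μ :=
    (f.mem_maxGenEigenspace μ v).mpr ⟨1, by simp [hv.apply_eq_smul]⟩
  refine (Submodule.eq_of_le_of_finrank_le
    ((Submodule.span_singleton_le_iff_mem _ _).mpr hmem) ?_).symm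
  rw [LinearMap.finrank_maxGenEigenspace_eq, hsimple, finrank_span_singleton hv.2]

end Field

variable {𝕜 E : Type*} [RCLike 𝕜] [NormedAddCommGroup E] [InnerProductSpace 𝕜 E]
  [FiniteDimensional 𝕜 E]

theorem orthogonal_maxGenEigenspace_inf_eigenspace_adjoint_eq_bot (f : End 𝕜 E) (μ : 𝕜) :
    (f.maxGenEigenspace μ)ᗮ ⊓ eigenspace (LinearMap.adjoint f) (starRingEnd 𝕜 μ) = ⊥ := by
  have hadj : eigenspace (LinearMap.adjoint f) (starRingEnd 𝕜 μ) =
      (LinearMap.range (f - μ • 1))ᗮ := by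
    rw [LinearMap.orthogonal_range, eigenspace_def, map_sub, map_smulₛₗ, LinearMap.adjoint_one]
  rw [hadj, Submodule.inf_orthogonal, maxGenEigenspace_sup_range_sub_smul_eq_top,
    Submodule.top_orthogonal_eq_bot]

end Module.End

open Module.End in
/-- Lemma: for a simple eigenvalue, left and right eigenvectors are not orthogonal. -/
theorem left_right_eigenvector_not_orthogonal {n : ℕ} (A : Matrix (Fin n) (Fin n) ℂ)
    (lam : ℂ) (hsimple : (Matrix.charpoly A).rootMultiplicity lam = 1)
    (v u : EuclideanSpace ℂ (Fin n)) (hv : v ≠ 0) (hu : u ≠ 0)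
    (heig : Matrix.toEuclideanLin A v = lam • v)
    (hleft : Matrix.toEuclideanLin Aᴴ u = (starRingEnd ℂ) lam • u) :
    (inner ℂ v u : ℂ) ≠ 0 := by
  intro horth
  have hspan := maxGenEigenspace_eq_span_of_rootMultiplicity_eq_one
    (by rwa [charpoly_toEuclideanLin]) (hasEigenvector_iff.mpr ⟨mem_eigenspace_iff.mpr heig, hv⟩)
  have hu_orth : u ∈ (maxGenEigenspace (toEuclideanLin A) lam)ᗮ := by
    rwa [hspan, Submodule.mem_orthogonal_singleton_iff_inner_right]
  have hu_eig : u ∈ eigenspace (LinearMap.adjoint (toEuclideanLin A)) (starRingEnd ℂ lam) := by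
    rwa [← toEuclideanLin_conjTranspose_eq_adjoint, mem_eigenspace_iff]
  refine hu ((Submodule.mem_bot ℂ).mp ?_)
  rw [← orthogonal_maxGenEigenspace_inf_eigenspace_adjoint_eq_bot (toEuclideanLin A) lam]
  exact ⟨hu_orth, hu_eig⟩

end
end

section
/- Let E and F be finite-dimensional real inner product spaces with dim E ≥ dim F, and let φ : E → F be a surjective linear map. For a surjective linear map ψ between real inner product spaces define its normal determinant ndet(ψ) := |det(ψ̃)|, where ψ̃ is the restriction of ψ to the orthogonal complement of ker ψ (equivalently, ndet(ψ) = √(det(ψ ψ*))). Let Γ := {(x, φ(x)) : x ∈ E} ⊆ E × F, with the inner product induced from the orthogonal direct sum E × F, and let p₁ : Γ → E, (x,φ(x)) ↦ x, and p₂ : Γ → F, (x,φ(x)) ↦ φ(x), be the projections. Then ndet(p₁)/ndet(p₂) = (ndet(φ))^{-1}. -/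
/-!
Parametrize the graph by `γ x = (x, φ x)`, so that `p₁ ∘ γ = id` and `p₂ ∘ γ = φ`. Since
`⟪γ x, γ y⟫ = ⟪x, (1 + φ*φ) y⟫`, the adjoint of `p₁` is `γ ∘ (1 + φ*φ)⁻¹`; hence
`p₁ p₁* = (1 + φ*φ)⁻¹` and, using `φ (1 + φ*φ) = (1 + φφ*) φ`, also
`p₂ p₂* = (1 + φφ*)⁻¹ φφ*`. By the Weinstein–Aronszajn identity `1 + φ*φ` and `1 + φφ*` have the
same determinant, which cancels in the quotient `ndet p₁ / ndet p₂`.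
-/

noncomputable section

open FiniteDimensional

variable {E F : Type*}
  [NormedAddCommGroup E] [InnerProductSpace ℝ E] [FiniteDimensional ℝ E]
  [NormedAddCommGroup F] [InnerProductSpace ℝ F] [FiniteDimensional ℝ F]

/-- The normal determinant of a linear map between real inner product spaces:
`ndet ψ = √(det (ψ ∘ ψ*))`, which equals `|det ψ̃|` for `ψ̃` the restriction of a
surjective `ψ` to the orthogonal complement of its kernel. -/
def ndet (ψ : E →ₗ[ℝ] F) : ℝ :=
  Real.sqrt (LinearMap.det (ψ ∘ₗ LinearMap.adjoint ψ))

/-- The graph `Γ = {(x, φ x)}` of `φ`, as a submodule of the orthogonal direct sum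
`E ×₂ F` (i.e. `WithLp 2 (E × F)`). -/
def graphL2 (φ : E →ₗ[ℝ] F) : Submodule ℝ (WithLp 2 (E × F)) :=
  (LinearMap.graph φ).comap (WithLp.linearEquiv 2 ℝ (E × F)).toLinearMap

/-- The first projection `Γ → E`. -/
def graphProj₁ (φ : E →ₗ[ℝ] F) : graphL2 φ →ₗ[ℝ] E :=
  (LinearMap.fst ℝ E F) ∘ₗ (WithLp.linearEquiv 2 ℝ (E × F)).toLinearMap ∘ₗ
    (graphL2 φ).subtype

/-- The second projection `Γ → F`. -/
def graphProj₂ (φ : E →ₗ[ℝ] F) : graphL2 φ →ₗ[ℝ] F :=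
  (LinearMap.snd ℝ E F) ∘ₗ (WithLp.linearEquiv 2 ℝ (E × F)).toLinearMap ∘ₗ
    (graphL2 φ).subtype

open LinearMap Matrix RealInnerProductSpace

theorem LinearMap.det_id_add_comp_comm {R M N : Type*} [CommRing R]
    [AddCommGroup M] [Module R M] [Module.Free R M] [Module.Finite R M]
    [AddCommGroup N] [Module R N] [Module.Free R N] [Module.Finite R N]
    (f : M →ₗ[R] N) (g : N →ₗ[R] M) :
    (LinearMap.id + f ∘ₗ g).det = (LinearMap.id + g ∘ₗ f).det := by
  let bM := Module.Free.chooseBasis R M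
  let bN := Module.Free.chooseBasis R N
  rw [← det_toMatrix bN, ← det_toMatrix bM, map_add, map_add, toMatrix_id, toMatrix_id,
    toMatrix_comp bN bM bN, toMatrix_comp bM bN bM, det_one_add_mul_comm]

theorem LinearMap.det_id_add_adjoint_comp_self_pos (φ : E →ₗ[ℝ] F) :
    0 < (LinearMap.id + adjoint φ ∘ₗ φ).det := by
  let bE := stdOrthonormalBasis ℝ E
  let bF := stdOrthonormalBasis ℝ F
  rw [← det_toMatrix bE.toBasis, map_add, toMatrix_id, toMatrix_comp _ bF.toBasis,
    toMatrix_adjoint bE bF]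
  exact (PosDef.one.add_posSemidef (posSemidef_conjTranspose_mul_self _)).det_pos

def graphEmbedding (φ : E →ₗ[ℝ] F) : E →ₗ[ℝ] graphL2 φ :=
  ((WithLp.linearEquiv 2 ℝ (E × F)).symm.toLinearMap ∘ₗ LinearMap.id.prod φ).codRestrict _
    fun x => by simp [graphL2, mem_graph_iff]

section graph

variable (φ : E →ₗ[ℝ] F)

omit [FiniteDimensional ℝ E] [FiniteDimensional ℝ F] in
theorem graphProj₁_graphEmbedding (x : E) : graphProj₁ φ (graphEmbedding φ x) = x := rfl

omit [FiniteDimensional ℝ E] [FiniteDimensional ℝ F] in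
theorem graphEmbedding_graphProj₁ (y : graphL2 φ) : graphEmbedding φ (graphProj₁ φ y) = y :=
  Subtype.ext <| WithLp.ofLp_injective 2 <| Prod.ext rfl y.2.symm

omit [FiniteDimensional ℝ E] [FiniteDimensional ℝ F] in
theorem graphProj₂_eq_comp_graphProj₁ : graphProj₂ φ = φ ∘ₗ graphProj₁ φ :=
  LinearMap.ext fun y => y.2

theorem inner_graphEmbedding (x y : E) :
    ⟪graphEmbedding φ x, graphEmbedding φ y⟫ = ⟪x, y + adjoint φ (φ y)⟫ := by
  rw [Submodule.coe_inner, WithLp.prod_inner_apply, inner_add_right, adjoint_inner_right]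
  rfl

theorem id_add_adjoint_comp_self_comp_graphProj₁_comp_adjoint :
    (LinearMap.id + adjoint φ ∘ₗ φ) ∘ₗ graphProj₁ φ ∘ₗ adjoint (graphProj₁ φ) = LinearMap.id := by
  refine LinearMap.ext fun x => ext_inner_left ℝ fun e => ?_
  let y := adjoint (graphProj₁ φ) x
  change ⟪e, graphProj₁ φ y + adjoint φ (φ (graphProj₁ φ y))⟫ = ⟪e, x⟫
  rw [← inner_graphEmbedding, graphEmbedding_graphProj₁, adjoint_inner_right,
    graphProj₁_graphEmbedding]

theorem det_graphProj₁_comp_adjoint :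
    (graphProj₁ φ ∘ₗ adjoint (graphProj₁ φ)).det = (LinearMap.id + adjoint φ ∘ₗ φ).det⁻¹ := by
  refine eq_inv_of_mul_eq_one_right ?_
  rw [← det_comp, id_add_adjoint_comp_self_comp_graphProj₁_comp_adjoint, det_id]

theorem det_graphProj₂_comp_adjoint :
    (graphProj₂ φ ∘ₗ adjoint (graphProj₂ φ)).det =
      (LinearMap.id + adjoint φ ∘ₗ φ).det⁻¹ * (φ ∘ₗ adjoint φ).det := by
  have hS : (LinearMap.id + φ ∘ₗ adjoint φ) ∘ₗ graphProj₂ φ ∘ₗ adjoint (graphProj₂ φ) =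
      φ ∘ₗ adjoint φ := by
    rw [graphProj₂_eq_comp_graphProj₁, adjoint_comp]
    calc (LinearMap.id + φ ∘ₗ adjoint φ) ∘ₗ (φ ∘ₗ graphProj₁ φ) ∘ₗ
          adjoint (graphProj₁ φ) ∘ₗ adjoint φ
        = φ ∘ₗ ((LinearMap.id + adjoint φ ∘ₗ φ) ∘ₗ graphProj₁ φ ∘ₗ adjoint (graphProj₁ φ)) ∘ₗ
            adjoint φ := by
          simp only [add_comp, comp_add, id_comp, comp_assoc]
      _ = φ ∘ₗ adjoint φ := by
          rw [id_add_adjoint_comp_self_comp_graphProj₁_comp_adjoint, id_comp]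
  rw [eq_inv_mul_iff_mul_eq₀ (det_id_add_adjoint_comp_self_pos φ).ne', ← det_id_add_comp_comm,
    ← det_comp, hS]

end graph

theorem ndet_graph_projections_general (φ : E →ₗ[ℝ] F) :
    ndet (graphProj₁ φ) / ndet (graphProj₂ φ) = (ndet φ)⁻¹ := by
  have hT := det_id_add_adjoint_comp_self_pos φ
  rw [ndet, ndet, ndet, det_graphProj₁_comp_adjoint, det_graphProj₂_comp_adjoint,
    Real.sqrt_mul (inv_nonneg.2 hT.le)]
  exact div_mul_cancel_left₀ (Real.sqrt_pos.2 (inv_pos.2 hT)).ne' _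

/-- Lemma: `ndet p₁ / ndet p₂ = (ndet φ)⁻¹` for a surjective linear map `φ : E → F`. -/
theorem ndet_graph_projections (φ : E →ₗ[ℝ] F) (hφ : Function.Surjective φ)
    (hdim : Module.finrank ℝ F ≤ Module.finrank ℝ E) :
    ndet (graphProj₁ φ) / ndet (graphProj₂ φ) = (ndet φ)⁻¹ :=
  ndet_graph_projections_general φ

end
end
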